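/- A poset P on {1,…,n} is an interval-poset (i.e. satisfies: a ≺_P c implies b ≺_P c for all a < b < c, and c ≺_P a implies b ≺_P a for all a < b < c) if and only if there exist binary trees T ≤ T' of size n in the Tamari order such that the relations of P are exactly those of the decreasing forest dec(T) together with those of the increasing forest inc(T'). -/

import Mathlib

open Polynomial

/-- A binary tree: either the empty tree or a pair of binary trees
(left and right subtrees) grafted on an internal node. -/
inductive BinTree : Type
  | leaf : BinTree
  | node : BinTree → BinTree → BinTree

namespace BinTree

/-- The size of a binary tree: its number of internal nodes. -/
def size : BinTree → ℕ
  | leaf => 0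
  | node l r => l.size + r.size + 1

/-- One right rotation somewhere in the tree: `Rot T T'` means that `T'` is obtained
from `T` by replacing one subtree of the form `y(x(A,B),C)` by `x(A,y(B,C))`. -/
inductive Rot : BinTree → BinTree → Prop
  | root (A B C : BinTree) : Rot (node (node A B) C) (node A (node B C))
  | left {L L' : BinTree} (R : BinTree) : Rot L L' → Rot (node L R) (node L' R)
  | right (L : BinTree) {R R' : BinTree} : Rot R R' → Rot (node L R) (node L R')

/-- The Tamari order: `TamariLE T T'` iff `T'` is obtained from `T` by a (possibly empty)
sequence of right rotations. -/
def TamariLE (T T' : BinTree) : Prop := Relation.ReflTransGen Rot T T'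

/-- The Tamari polynomial `B_T ∈ ℤ[x]`: `B_∅ = 1` and for `T = x(L,R)`, `B_T` is the
unique polynomial with `(x-1)·B_T = x·B_L·(x·B_R - B_R(1))` (exact division by the
monic polynomial `X - 1`, the right-hand side vanishing at `x = 1`). -/
noncomputable def tamPoly : BinTree → Polynomial ℤ
  | leaf => 1
  | node l r =>
      (X * tamPoly l * (X * tamPoly r - C ((tamPoly r).eval 1))) /ₘ (X - C 1)

/-- The mirror Tamari polynomial, obtained by exchanging the roles of the left and
right subtrees in the recursive definition of the Tamari polynomial. -/
noncomputable def tamPolyMirror : BinTree → Polynomial ℤ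
  | leaf => 1
  | node l r =>
      (X * tamPolyMirror r * (X * tamPolyMirror l - C ((tamPolyMirror l).eval 1))) /ₘ (X - C 1)

/-- The number of nodes on the left border of a binary tree. -/
def leftBorder : BinTree → ℕ
  | leaf => 0
  | node l _ => l.leftBorder + 1

/-- The number of nodes on the right border of a binary tree. -/
def rightBorder : BinTree → ℕ
  | leaf => 0
  | node _ r => r.rightBorder + 1

/-- `inSub T a b`: in the unique binary-search-tree labelling of `T` by `1,…,size T`
(all labels of the left subtree of a node are smaller than its label, all labels of its
right subtree are larger), the node labelled `a` belongs to the subtree rooted at the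
node labelled `b` (in particular `inSub T a a` holds for every node label `a`). -/
def inSub : BinTree → ℕ → ℕ → Prop
  | leaf => fun _ _ => False
  | node l r => fun a b =>
      (b = l.size + 1 ∧ 1 ≤ a ∧ a ≤ l.size + r.size + 1) ∨
      inSub l a b ∨
      (l.size + 1 < a ∧ l.size + 1 < b ∧ inSub r (a - (l.size + 1)) (b - (l.size + 1)))

/-- The binary search tree poset of `T`: `bstRel T a b` iff `a ≺_T b`, i.e. `a ≠ b` and
the node labelled `a` is in the subtree rooted at the node labelled `b`. -/
def bstRel (T : BinTree) (a b : ℕ) : Prop := a ≠ b ∧ inSub T a b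

/-- The increasing forest `inc(T)`: `a ≺ b` iff `a < b` and `a ≺_T b`. -/
def incRel (T : BinTree) (a b : ℕ) : Prop := a < b ∧ bstRel T a b

/-- The decreasing forest `dec(T)`: `b ≺ a` iff `b > a` and `b ≺_T a`. -/
def decRel (T : BinTree) (a b : ℕ) : Prop := b < a ∧ bstRel T a b

/-- The relations of the interval-poset `IP[T,T']`: exactly those of `dec(T)`
together with those of `inc(T')`. -/
def IPrel (T T' : BinTree) (a b : ℕ) : Prop := decRel T a b ∨ incRel T' a b

end BinTree

open BinTree

/-- `σ` is a linear extension of the strict relation `rel` on `{1,…,n}`: reading the word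
`σ(1)…σ(n)` (the `i`-th letter being the label `(σ i : ℕ) + 1`), whenever `rel a b` holds
the letter `a` appears before the letter `b`. -/
def IsLinExt (n : ℕ) (rel : ℕ → ℕ → Prop) (σ : Equiv.Perm (Fin n)) : Prop :=
  ∀ i j : Fin n, rel ((σ i : ℕ) + 1) ((σ j : ℕ) + 1) → i < j

/-- An interval-poset of size `n`: a (strict) poset on `{1,…,n}` such that
`a ≺ c` implies `b ≺ c` for all `a < b < c`, and `c ≺ a` implies `b ≺ a` for all
`a < b < c`. -/
def IsIntervalPoset (n : ℕ) (rel : ℕ → ℕ → Prop) : Prop :=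
  (∀ a b, rel a b → 1 ≤ a ∧ a ≤ n ∧ 1 ≤ b ∧ b ≤ n) ∧
  (∀ a, ¬ rel a a) ∧
  (∀ a b c, rel a b → rel b c → rel a c) ∧
  (∀ a b c, a < b → b < c → rel a c → rel b c) ∧
  (∀ a b c, a < b → b < c → rel c a → rel b a)

/-- `trees(P)` : the number of connected components of the forest formed by the decreasing
relations of `P`, i.e. the number of `k ∈ {1,…,n}` such that there is no `j < k`
with `k ≺_P j`. -/
noncomputable def treeStat (n : ℕ) (rel : ℕ → ℕ → Prop) : ℕ :=
  Set.ncard {k : ℕ | 1 ≤ k ∧ k ≤ n ∧ ∀ j, j < k → ¬ rel k j}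

/-- The composition `𝔹(I1,I2)` of two interval-posets of sizes `k1` and `k2`:
the set of interval-posets `I` of size `k1+k2+1` such that
(i) the relations of `I` among `1,…,k1` are exactly those of `I1`,
(ii) the relations of `I` among `k1+2,…,k1+k2+1` are exactly those of `I2` shifted
by `k1+1`, (iii) `i ≺_I k1+1` for all `i ≤ k1`, and (iv) there is no relation
`k1+1 ≺_I j` for `j > k1+1`. -/
def Comp (k1 k2 : ℕ) (I1 I2 : ℕ → ℕ → Prop) : Set (ℕ → ℕ → Prop) :=
  {I | IsIntervalPoset (k1 + k2 + 1) I ∧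
    (∀ a b, 1 ≤ a → a ≤ k1 → 1 ≤ b → b ≤ k1 → (I a b ↔ I1 a b)) ∧
    (∀ a b, k1 + 2 ≤ a → a ≤ k1 + k2 + 1 → k1 + 2 ≤ b → b ≤ k1 + k2 + 1 →
      (I a b ↔ I2 (a - (k1 + 1)) (b - (k1 + 1)))) ∧
    (∀ i, 1 ≤ i → i ≤ k1 → I i (k1 + 1)) ∧
    (∀ j, k1 + 1 < j → ¬ I (k1 + 1) j)}

/-- The co-inversions of a permutation `σ` of `{1,…,n}` (written as the word
`σ(1)…σ(n)`): pairs `(σ(i), σ(j))` with `i < j` and `σ(i) > σ(j)`. -/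
def coinv (n : ℕ) (σ : Equiv.Perm (Fin n)) : Set (Fin n × Fin n) :=
  {p | ∃ i j : Fin n, i < j ∧ σ j < σ i ∧ p = (σ i, σ j)}

/-!
Label the nodes of a binary tree in in-order and let `T.rightSize i` be the size of the right
subtree of node `i`. The labels `a > b` in the subtree of `b` are then exactly those with
`a ≤ b + T.rightSize b`, so `dec(T)` is encoded by the sequence `T.rightSize`; by mirror
symmetry, `inc(T)` is encoded likewise by the sizes of the left subtrees.

A rotation enlarges one entry of `T.rightSize` and keeps the others. Conversely, if
`T.rightSize ≤ T'.rightSize` pointwise, the least label where they differ is a left child in `T`,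
and the rotation at its parent stays below `T'`. Hence `T ≤ T'` iff `dec(T) ⊆ dec(T')`, iff
`inc(T') ⊆ inc(T)`. So for `T ≤ T'` every relation of `dec(T) ∪ inc(T')` is a subtree relation
in both trees, which makes the union transitive.

Conversely, in an interval-poset the `a > b` with `a ≺ b` form an interval `(b, b + s b]`,
and these intervals are nested, so they are the right subtrees of a tree `T`. Dually, the
increasing relations are those of a tree `T'`. Finally `dec(T) ⊆ dec(T')`, since otherwise the
parent in `T'` of some subtree would give a cycle of length two in the poset.
-/

namespace BinTree

/-- `T.rightSize i` is the size of the right subtree of the node labelled `i`; it is `0`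
when `i` is not a label of `T`. -/
def rightSize : BinTree → ℕ → ℕ
  | leaf, _ => 0
  | node l r, i =>
    if i ≤ l.size then l.rightSize i
    else if i = l.size + 1 then r.size
    else r.rightSize (i - (l.size + 1))

section RightSize

variable {l r : BinTree} {i : ℕ}

theorem rightSize_node_of_le (h : i ≤ l.size) : (node l r).rightSize i = l.rightSize i :=
  if_pos h

theorem rightSize_node_of_eq (h : i = l.size + 1) : (node l r).rightSize i = r.size := by
  simp [rightSize, h]

theorem rightSize_node_of_gt (h : l.size + 1 < i) :
    (node l r).rightSize i = r.rightSize (i - (l.size + 1)) := by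
  simp only [rightSize, if_neg (show ¬i ≤ l.size by omega),
    if_neg (show i ≠ l.size + 1 by omega)]

@[simp]
theorem rightSize_zero (T : BinTree) : T.rightSize 0 = 0 := by
  induction T with
  | leaf => rfl
  | node l r ihl _ => rw [rightSize_node_of_le (Nat.zero_le _), ihl]

theorem rightSize_le_size_sub (T : BinTree) (i : ℕ) : T.rightSize i ≤ T.size - i := by
  induction T generalizing i with
  | leaf => simp [rightSize]
  | node l r ihl ihr =>
    simp only [size]
    rcases lt_trichotomy i (l.size + 1) with h | h | h
    · have := ihl i
      rw [rightSize_node_of_le (by omega)]; omega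
    · rw [rightSize_node_of_eq h]; omega
    · have := ihr (i - (l.size + 1))
      rw [rightSize_node_of_gt h]; omega

end RightSize

section InSub

variable {T : BinTree} {a b c k : ℕ}

theorem inSub_bounds (h : T.inSub a b) : 1 ≤ a ∧ a ≤ T.size ∧ 1 ≤ b ∧ b ≤ T.size := by
  induction T generalizing a b with
  | leaf => exact h.elim
  | node l r ihl ihr =>
    simp only [inSub, size] at h ⊢
    rcases h with h | h | ⟨ha, hb, h⟩
    · omega
    · have := ihl h; omega
    · have := ihr h; omega

theorem inSub_trans (hab : T.inSub a b) (hbc : T.inSub b c) : T.inSub a c := by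
  induction T generalizing a b c with
  | leaf => exact hab.elim
  | node l r ihl ihr =>
    have ha := inSub_bounds hab
    simp only [inSub, size] at hab hbc ha ⊢
    rcases hbc with ⟨hc, -⟩ | hbc | ⟨hb, hc, hbc⟩
    · exact .inl ⟨hc, ha.1, ha.2.1⟩
    · have := inSub_bounds hbc
      rcases hab with ⟨hb, -⟩ | hab | ⟨-, hb, -⟩
      · omega
      · exact .inr (.inl (ihl hab hbc))
      · omega
    · rcases hab with ⟨hb', -⟩ | hab | ⟨ha, -, hab⟩
      · omega
      · have := inSub_bounds hab; omega
      · exact .inr (.inr ⟨ha, hc, ihr hab hbc⟩)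

theorem inSub_antisymm (hab : T.inSub a b) (hba : T.inSub b a) : a = b := by
  induction T generalizing a b with
  | leaf => exact hab.elim
  | node l r ihl ihr =>
    simp only [inSub] at hab hba
    rcases hab with ⟨hb, -⟩ | hab | ⟨ha, hb, hab⟩ <;>
      rcases hba with ⟨ha', -⟩ | hba | ⟨ha', hb', hba⟩
    all_goals first
      | omega
      | exact ihl hab hba
      | (have := ihr hab hba; omega)
      | (have := inSub_bounds hab; omega)
      | (have := inSub_bounds hba; omega)

theorem inSub_of_le_of_le (h : T.inSub a c) (hab : a ≤ b) (hbc : b ≤ c) : T.inSub b c := by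
  induction T generalizing a b c with
  | leaf => exact h.elim
  | node l r ihl ihr =>
    have := inSub_bounds h
    simp only [inSub, size] at h this ⊢
    rcases h with ⟨hc, -⟩ | h | ⟨ha, hc, h⟩
    · exact .inl ⟨hc, by omega, by omega⟩
    · exact .inr (.inl (ihl h hab hbc))
    · exact .inr (.inr ⟨by omega, hc, ihr h (by omega) (by omega)⟩)

theorem inSub_iff_of_lt (hba : b < a) : T.inSub a b ↔ a ≤ b + T.rightSize b := by
  induction T generalizing a b with
  | leaf => simp [inSub, rightSize]; omega
  | node l r ihl ihr =>
    simp only [inSub]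
    rcases lt_trichotomy b (l.size + 1) with hb | hb | hb
    · rw [rightSize_node_of_le (by omega), ← ihl hba]
      constructor
      · rintro (⟨hb', -⟩ | h | ⟨-, hb', -⟩)
        · omega
        · exact h
        · omega
      · exact fun h => .inr (.inl h)
    · rw [rightSize_node_of_eq hb]
      constructor
      · rintro (⟨-, -, h⟩ | h | ⟨-, hb', -⟩)
        · omega
        · have := inSub_bounds h; omega
        · omega
      · exact fun h => .inl ⟨hb, by omega, by omega⟩
    · obtain ⟨b, rfl⟩ : ∃ b', b = b' + (l.size + 1) := ⟨b - (l.size + 1), by omega⟩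
      rw [rightSize_node_of_gt hb, Nat.add_sub_cancel]
      have := ihr (a := a - (l.size + 1)) (b := b) (by omega)
      constructor
      · rintro (⟨hb', -⟩ | h | ⟨-, -, h⟩)
        · omega
        · have := inSub_bounds h; omega
        · have := this.1 h; omega
      · exact fun h => .inr (.inr ⟨by omega, hb, this.2 (by omega)⟩)

theorem le_add_rightSize_of_inSub (h : T.inSub a b) : a ≤ b + T.rightSize b := by
  rcases lt_or_ge b a with hba | hab
  · exact (inSub_iff_of_lt hba).1 h
  · omega

theorem add_rightSize_le_of_inSub (h : T.inSub a b) :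
    a + T.rightSize a ≤ b + T.rightSize b := by
  rcases Nat.eq_zero_or_pos (T.rightSize a) with h0 | hpos
  · rw [h0]; exact le_add_rightSize_of_inSub h
  · exact le_add_rightSize_of_inSub
      (inSub_trans ((inSub_iff_of_lt (by omega)).2 le_rfl) h)

theorem inSub_add_rightSize_succ (hk : 1 ≤ k) (h : k + T.rightSize k < T.size) :
    T.inSub k (k + T.rightSize k + 1) := by
  induction T generalizing k with
  | leaf => exact absurd h (by simp [size])
  | node l r ihl ihr =>
    simp only [inSub, size] at h ⊢
    rcases lt_trichotomy k (l.size + 1) with hk' | hk' | hk'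
    · have := rightSize_le_size_sub l k
      rw [rightSize_node_of_le (by omega)] at h ⊢
      rcases (show k + l.rightSize k ≤ l.size by omega).eq_or_lt with he | hlt
      · exact .inl ⟨by omega, hk, by omega⟩
      · exact .inr (.inl (ihl hk hlt))
    · rw [rightSize_node_of_eq hk'] at h; omega
    · rw [rightSize_node_of_gt hk'] at h ⊢
      have := ihr (k := k - (l.size + 1)) (by omega) (by omega)
      refine .inr (.inr ⟨hk', by omega, ?_⟩)
      rwa [show k + r.rightSize (k - (l.size + 1)) + 1 - (l.size + 1) =
        k - (l.size + 1) + r.rightSize (k - (l.size + 1)) + 1 by omega]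

theorem decRel_iff : T.decRel a b ↔ b < a ∧ a ≤ b + T.rightSize b := by
  simp only [decRel, bstRel]
  constructor
  · rintro ⟨hba, -, h⟩
    exact ⟨hba, (inSub_iff_of_lt hba).1 h⟩
  · rintro ⟨hba, h⟩
    exact ⟨hba, by omega, (inSub_iff_of_lt hba).2 h⟩

end InSub

def mirror : BinTree → BinTree
  | leaf => leaf
  | node l r => node r.mirror l.mirror

section Mirror

variable {T T' : BinTree} {a b : ℕ}

@[simp]
theorem size_mirror (T : BinTree) : T.mirror.size = T.size := by
  induction T with
  | leaf => rfl
  | node l r ihl ihr => simp only [mirror, size, ihl, ihr]; omega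

@[simp]
theorem mirror_mirror (T : BinTree) : T.mirror.mirror = T := by
  induction T with
  | leaf => rfl
  | node l r ihl ihr => simp only [mirror, ihl, ihr]

theorem inSub_mirror : T.mirror.inSub a b ↔ T.inSub (T.size + 1 - a) (T.size + 1 - b) := by
  induction T generalizing a b with
  | leaf => simp [mirror, inSub]
  | node l r ihl ihr =>
    simp only [mirror, inSub, size, size_mirror, ihl, ihr]
    rw [show l.size + r.size + 1 + 1 - a - (l.size + 1) = r.size + 1 - a by omega,
      show l.size + r.size + 1 + 1 - b - (l.size + 1) = r.size + 1 - b by omega]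
    constructor
    · rintro (⟨hb, ha⟩ | h | ⟨ha, hb, h⟩)
      · exact .inl ⟨by omega, by omega, by omega⟩
      · have := inSub_bounds h
        exact .inr (.inr ⟨by omega, by omega, h⟩)
      · have := inSub_bounds h
        refine .inr (.inl ?_)
        rwa [show l.size + 1 - (a - (r.size + 1)) = l.size + r.size + 1 + 1 - a by omega,
          show l.size + 1 - (b - (r.size + 1)) = l.size + r.size + 1 + 1 - b by omega] at h
    · rintro (⟨hb, ha⟩ | h | ⟨ha, hb, h⟩)
      · exact .inl ⟨by omega, by omega, by omega⟩
      · have := inSub_bounds h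
        refine .inr (.inr ⟨by omega, by omega, ?_⟩)
        rwa [show l.size + 1 - (a - (r.size + 1)) = l.size + r.size + 1 + 1 - a by omega,
          show l.size + 1 - (b - (r.size + 1)) = l.size + r.size + 1 + 1 - b by omega]
      · have := inSub_bounds h
        exact .inr (.inl h)

theorem incRel_iff_decRel_mirror :
    T.incRel a b ↔ T.mirror.decRel (T.size + 1 - a) (T.size + 1 - b) := by
  simp only [incRel, decRel, bstRel, inSub_mirror]
  constructor
  · rintro ⟨hab, -, h⟩
    have := inSub_bounds h
    refine ⟨by omega, by omega, ?_⟩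
    rwa [Nat.sub_sub_self (by omega), Nat.sub_sub_self (by omega)]
  · rintro ⟨hab, -, h⟩
    have := inSub_bounds h
    rw [Nat.sub_sub_self (by omega), Nat.sub_sub_self (by omega)] at h
    exact ⟨by omega, by omega, h⟩

theorem Rot.mirror (h : Rot T T') : Rot T'.mirror T.mirror := by
  induction h with
  | root A B C => exact .root _ _ _
  | left R _ ih => exact .right _ ih
  | right L _ ih => exact .left _ ih

theorem TamariLE.mirror (h : TamariLE T T') : TamariLE T'.mirror T.mirror := by
  induction h with
  | refl => exact .refl
  | tail _ hr ih => exact ih.head hr.mirror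

end Mirror

section Tamari

variable {T T' U U' : BinTree} {a b : ℕ}

theorem Rot.size_eq (h : Rot U U') : U'.size = U.size := by
  induction h with
  | root => simp only [size]; omega
  | left _ _ ih | right _ _ ih => simp only [size, ih]

theorem rightSize_rot_root (A B C : BinTree) (k : ℕ) :
    (node A (node B C)).rightSize k =
      if k = A.size + 1 then B.size + C.size + 1 else (node (node A B) C).rightSize k := by
  rcases lt_trichotomy k (A.size + 1) with hk | hk | hk
  · rw [if_neg hk.ne, rightSize_node_of_le (by omega),
      rightSize_node_of_le (by simp [size]; omega), rightSize_node_of_le (by omega)]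
  · rw [if_pos hk, rightSize_node_of_eq hk, size]
  · rw [if_neg hk.ne', rightSize_node_of_gt hk]
    rcases lt_trichotomy k (A.size + B.size + 2) with hk' | hk' | hk'
    · rw [rightSize_node_of_le (by omega), rightSize_node_of_le (by simp [size]; omega),
        rightSize_node_of_gt hk]
    · rw [rightSize_node_of_eq (by omega), rightSize_node_of_eq (by simp [size]; omega)]
    · rw [rightSize_node_of_gt (by omega), rightSize_node_of_gt (by simp [size]; omega), size,
        Nat.sub_sub]
      congr 1
      omega

theorem Rot.rightSize_le (h : Rot U U') (i : ℕ) : U.rightSize i ≤ U'.rightSize i := by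
  induction h generalizing i with
  | root A B C =>
    rw [rightSize_rot_root]
    split_ifs with hi
    · rw [rightSize_node_of_le (by simp [size]; omega), rightSize_node_of_eq hi]; omega
    · exact le_rfl
  | @left L L' R h ih =>
    rcases lt_trichotomy i (L.size + 1) with hi | hi | hi
    · rw [rightSize_node_of_le (by omega), rightSize_node_of_le (by rw [h.size_eq]; omega)]
      exact ih i
    · rw [rightSize_node_of_eq hi, rightSize_node_of_eq (by rw [h.size_eq]; omega)]
    · rw [rightSize_node_of_gt hi, rightSize_node_of_gt (by rw [h.size_eq]; omega), h.size_eq]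
  | @right L R R' h ih =>
    rcases lt_trichotomy i (L.size + 1) with hi | hi | hi
    · rw [rightSize_node_of_le (by omega), rightSize_node_of_le (by omega)]
    · rw [rightSize_node_of_eq hi, rightSize_node_of_eq hi, h.size_eq]
    · rw [rightSize_node_of_gt hi, rightSize_node_of_gt hi]
      exact ih _

theorem TamariLE.size_eq (h : TamariLE T T') : T'.size = T.size := by
  induction h with
  | refl => rfl
  | tail _ hr ih => rw [hr.size_eq, ih]

theorem TamariLE.rightSize_le (h : TamariLE T T') (i : ℕ) : T.rightSize i ≤ T'.rightSize i := by
  induction h with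
  | refl => exact le_rfl
  | tail _ hr ih => exact ih.trans (hr.rightSize_le i)

theorem TamariLE.decRel (h : TamariLE T T') (hd : T.decRel a b) : T'.decRel a b := by
  rw [decRel_iff] at hd ⊢
  have := h.rightSize_le b
  omega

theorem TamariLE.incRel (h : TamariLE T T') (hi : T'.incRel a b) : T.incRel a b := by
  rw [incRel_iff_decRel_mirror] at hi ⊢
  rw [h.size_eq] at hi
  exact h.mirror.decRel hi

theorem inSub_of_IPrel (h : TamariLE T T') (hr : IPrel T T' a b) :
    T.inSub a b ∧ T'.inSub a b := by
  rcases hr with hr | hr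
  · exact ⟨hr.2.2, (h.decRel hr).2.2⟩
  · exact ⟨(h.incRel hr).2.2, hr.2.2⟩

theorem isIntervalPoset_IPrel {n : ℕ} (hT : T.size = n) (hT' : T'.size = n)
    (h : TamariLE T T') : IsIntervalPoset n (IPrel T T') := by
  refine ⟨fun a b hr => ?_, fun a hr => ?_, fun a b c hab hbc => ?_,
    fun a b c hab hbc hr => ?_, fun a b c hab hbc hr => ?_⟩
  · have := inSub_bounds (inSub_of_IPrel h hr).1
    omega
  · rcases hr with hr | hr <;> exact lt_irrefl a hr.1
  · obtain ⟨hab₁, hab₂⟩ := inSub_of_IPrel h hab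
    obtain ⟨hbc₁, hbc₂⟩ := inSub_of_IPrel h hbc
    have hne : a ≠ b := by rcases hab with hab | hab <;> exact hab.2.1
    have hac : a ≠ c := by
      rintro rfl
      exact hne (inSub_antisymm hab₁ hbc₁)
    rcases hac.lt_or_gt with hlt | hlt
    · exact .inr ⟨hlt, hac, inSub_trans hab₂ hbc₂⟩
    · exact .inl ⟨hlt, hac, inSub_trans hab₁ hbc₁⟩
  · rcases hr with hr | hr
    · exact absurd hr.1 (by omega)
    · exact .inr ⟨hbc, by omega, inSub_of_le_of_le hr.2.2 hab.le hbc.le⟩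
  · rcases hr with hr | hr
    · rw [decRel_iff] at hr
      exact .inl (decRel_iff.2 ⟨hab, by omega⟩)
    · exact absurd hr.1 (by omega)

end Tamari

section TamariConverse

variable {S S' : BinTree} {i : ℕ}

theorem eq_of_rightSize_eq (hsz : S.size = S'.size)
    (h : ∀ i, 1 ≤ i → S.rightSize i = S'.rightSize i) : S = S' := by
  induction S generalizing S' with
  | leaf => cases S' with
    | leaf => rfl
    | node => simp [size] at hsz
  | node l r ihl ihr =>
    cases S' with
    | leaf => simp [size] at hsz
    | node l' r' =>
      simp only [size] at hsz
      -- the root is the least label whose subtree reaches the last label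
      have hl : l.size = l'.size := by
        by_contra hne
        rcases Nat.lt_or_gt_of_ne hne with hlt | hlt
        · have h1 := h (l.size + 1) (by omega)
          rw [rightSize_node_of_eq rfl,
            rightSize_node_of_le (show l.size + 1 ≤ l'.size by omega)] at h1
          have := rightSize_le_size_sub l' (l.size + 1)
          omega
        · have h1 := h (l'.size + 1) (by omega)
          rw [rightSize_node_of_eq rfl,
            rightSize_node_of_le (show l'.size + 1 ≤ l.size by omega)] at h1
          have := rightSize_le_size_sub l (l'.size + 1)
          omega
      obtain rfl : l = l' := ihl hl fun i hi => by
        rcases le_or_gt i l.size with hi' | hi'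
        · have := h i hi
          rwa [rightSize_node_of_le hi', rightSize_node_of_le (hl ▸ hi')] at this
        · have := rightSize_le_size_sub l i
          have := rightSize_le_size_sub l' i
          omega
      obtain rfl : r = r' := ihr (by omega) fun i hi => by
        have := h (i + (l.size + 1)) (by omega)
        rwa [rightSize_node_of_gt (by omega), rightSize_node_of_gt (by omega),
          Nat.add_sub_cancel] at this
      rfl

/-- `hleft` says that `i` is not a right child, so `i` is the left child of
`i + S.rightSize i + 1`; `S'` is the rotation at that node. -/
theorem exists_rot_rightSize (hi : 1 ≤ i) (hlt : i + S.rightSize i < S.size)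
    (hleft : ∀ p, 1 ≤ p → p < i → p + S.rightSize p ≠ i + S.rightSize i) :
    ∃ S', Rot S S' ∧ (∀ k ≠ i, S'.rightSize k = S.rightSize k) ∧
      S'.rightSize i = S.rightSize i + 1 + S.rightSize (i + S.rightSize i + 1) := by
  induction S generalizing i with
  | leaf => simp [size] at hlt
  | node l r ihl ihr =>
    rcases lt_trichotomy i (l.size + 1) with hil | hil | hil
    · have hl := rightSize_le_size_sub l i
      rw [rightSize_node_of_le (by omega)] at hlt hleft ⊢
      rcases (show i + l.rightSize i ≤ l.size by omega).eq_or_lt with hreach | hreach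
      · obtain _ | ⟨A, B⟩ := l
        · simp [size] at hil; omega
        simp only [size] at hil hreach
        obtain hiA | rfl | hiA := lt_trichotomy i (A.size + 1)
        · have := rightSize_le_size_sub A i
          rw [rightSize_node_of_le (by omega)] at hreach
          omega
        · refine ⟨node A (node B r), .root A B r, fun k hk => ?_, ?_⟩
          · rw [rightSize_rot_root, if_neg hk]
          · rw [rightSize_rot_root, if_pos rfl, rightSize_node_of_eq rfl,
              rightSize_node_of_eq (l := node A B) (by simp only [size]; omega)]
            omega
        · refine absurd ?_ (hleft (A.size + 1) (by omega) hiA)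
          rw [rightSize_node_of_le (by simp [size]), rightSize_node_of_eq rfl, hreach]
          omega
      · obtain ⟨l', hrot, hk, hi'⟩ := ihl hi hreach fun p hp hpi => by
          simpa only [rightSize_node_of_le (show p ≤ l.size by omega)] using hleft p hp hpi
        have hsz := hrot.size_eq
        refine ⟨node l' r, .left r hrot, fun k hki => ?_, ?_⟩
        · rcases lt_trichotomy k (l.size + 1) with hk' | hk' | hk'
          · rw [rightSize_node_of_le (by omega), rightSize_node_of_le (by omega), hk k hki]
          · rw [rightSize_node_of_eq (by omega), rightSize_node_of_eq hk']
          · rw [rightSize_node_of_gt (by omega), rightSize_node_of_gt hk', hsz]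
        · rw [rightSize_node_of_le (by omega), rightSize_node_of_le (by omega), hi']
    · rw [rightSize_node_of_eq hil] at hlt
      simp only [size] at hlt
      omega
    · obtain ⟨i, rfl⟩ : ∃ i', i = i' + (l.size + 1) := ⟨i - (l.size + 1), by omega⟩
      have hr := rightSize_le_size_sub r i
      rw [rightSize_node_of_gt hil, Nat.add_sub_cancel] at hlt hleft ⊢
      simp only [size] at hlt
      obtain ⟨r', hrot, hk, hi'⟩ := ihr (i := i) (by omega) (by omega) fun p hp hpi => by
        have := hleft (p + (l.size + 1)) (by omega) (by omega)
        rw [rightSize_node_of_gt (by omega), Nat.add_sub_cancel] at this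
        omega
      refine ⟨node l r', .right l hrot, fun k hki => ?_, ?_⟩
      · rcases lt_trichotomy k (l.size + 1) with hk' | hk' | hk'
        · rw [rightSize_node_of_le (by omega), rightSize_node_of_le (by omega)]
        · rw [rightSize_node_of_eq hk', rightSize_node_of_eq hk', hrot.size_eq]
        · rw [rightSize_node_of_gt hk', rightSize_node_of_gt hk', hk _ (by omega)]
      · rw [rightSize_node_of_gt hil, Nat.add_sub_cancel, hi', rightSize_node_of_gt (by omega),
          show i + (l.size + 1) + r.rightSize i + 1 - (l.size + 1) = i + r.rightSize i + 1 by omega]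

end TamariConverse

theorem tamariLE_of_rightSize_le {S S' : BinTree} (hsz : S.size = S'.size)
    (hle : ∀ i, S.rightSize i ≤ S'.rightSize i) : TamariLE S S' := by
  classical
  by_cases hne : ∃ i, 1 ≤ i ∧ S.rightSize i < S'.rightSize i
  swap
  · push Not at hne
    rw [eq_of_rightSize_eq hsz fun i hi => (hle i).antisymm (hne i hi)]
    exact .refl
  -- the least label `i` whose right size is too small is a left child in `S`
  obtain ⟨i, ⟨hi, hlt⟩, hmin⟩ : ∃ i, (1 ≤ i ∧ S.rightSize i < S'.rightSize i) ∧
      ∀ p < i, ¬(1 ≤ p ∧ S.rightSize p < S'.rightSize p) :=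
    ⟨Nat.find hne, Nat.find_spec hne, fun _ => Nat.find_min hne⟩
  have hS' := rightSize_le_size_sub S' i
  obtain ⟨S₂, hrot, hk, hi₂⟩ :=
    exists_rot_rightSize (S := S) hi (by omega) fun p hp hpi hreach => by
      have hp' : S.rightSize p = S'.rightSize p :=
        (hle p).antisymm (not_lt.1 fun h => hmin p hpi ⟨hp, h⟩)
      have := add_rightSize_le_of_inSub ((inSub_iff_of_lt (T := S') hpi).2 (by omega))
      omega
  have hj := add_rightSize_le_of_inSub
    ((inSub_iff_of_lt (T := S') (a := i + S.rightSize i + 1) (b := i) (by omega)).2 (by omega))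
  have hle₂ : ∀ k, S₂.rightSize k ≤ S'.rightSize k := fun k => by
    rcases eq_or_ne k i with rfl | hki
    · have := hle (k + S.rightSize k + 1)
      omega
    · rw [hk k hki]
      exact hle k
  exact .head hrot (tamariLE_of_rightSize_le (hrot.size_eq.trans hsz) hle₂)
termination_by ∑ k ∈ Finset.range (S'.size + 1), (S'.rightSize k - S.rightSize k)
decreasing_by
  refine Finset.sum_lt_sum (fun k _ => ?_) ⟨i, Finset.mem_range.2 (by omega), by omega⟩
  rcases eq_or_ne k i with rfl | hki
  · omega
  · rw [hk k hki]

theorem tamariLE_of_forall_decRel_not_incRel {T T' : BinTree} (hsz : T.size = T'.size)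
    (h : ∀ a b, T.decRel a b → ¬T'.incRel b a) : TamariLE T T' := by
  refine tamariLE_of_rightSize_le hsz fun k => not_lt.1 fun hk => ?_
  -- the parent `c` of the subtree of `k` in `T'` lies in the subtree of `k` in `T`
  set c := k + T'.rightSize k + 1
  have := rightSize_le_size_sub T k
  have hk1 : 1 ≤ k := Nat.one_le_iff_ne_zero.2 fun h0 => by
    simp only [h0, rightSize_zero, lt_self_iff_false] at hk
  refine h c k (decRel_iff.2 ⟨by omega, by omega⟩) ⟨by omega, by omega, ?_⟩
  exact inSub_add_rightSize_succ hk1 (by omega)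

def IsRightSizes (n : ℕ) (v : ℕ → ℕ) : Prop :=
  ∀ i, 1 ≤ i → i ≤ n →
    i + v i ≤ n ∧ ∀ j, i < j → j ≤ i + v i → j + v j ≤ i + v i

theorem exists_rightSize_eq {n : ℕ} {v : ℕ → ℕ} (hv : IsRightSizes n v) :
    ∃ T : BinTree, T.size = n ∧ ∀ i, 1 ≤ i → i ≤ n → T.rightSize i = v i := by
  classical
  induction n using Nat.strong_induction_on generalizing v with
  | _ n ih =>
    rcases Nat.eq_zero_or_pos n with rfl | hn
    · exact ⟨leaf, rfl, fun i h1 h2 => by omega⟩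
    -- the root is the least label whose right subtree reaches `n`
    have hex : ∃ m, 1 ≤ m ∧ m + v m = n := ⟨n, hn, by have := (hv n hn le_rfl).1; omega⟩
    obtain ⟨m, ⟨hm1, hmn⟩, hmin⟩ :
        ∃ m, (1 ≤ m ∧ m + v m = n) ∧ ∀ k < m, ¬(1 ≤ k ∧ k + v k = n) :=
      ⟨Nat.find hex, Nat.find_spec hex, fun _ => Nat.find_min hex⟩
    obtain ⟨L, hL, hLv⟩ := ih (m - 1) (by omega) (v := v) fun i h1 h2 => by
      obtain ⟨hi, hnest⟩ := hv i h1 (by omega)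
      refine ⟨?_, hnest⟩
      by_contra hlt
      have := hnest m (by omega) (by omega)
      exact hmin i (by omega) ⟨h1, by omega⟩
    obtain ⟨R, hR, hRv⟩ := ih (n - m) (by omega) (v := fun j => v (j + m)) fun i h1 h2 => by
      dsimp only at h2 ⊢
      obtain ⟨hi, hnest⟩ := hv (i + m) (by omega) (by omega)
      refine ⟨by omega, fun j hj1 hj2 => ?_⟩
      have := hnest (j + m) (by omega) (by omega)
      omega
    refine ⟨node L R, by simp only [size]; omega, fun i h1 h2 => ?_⟩
    rcases lt_trichotomy i (L.size + 1) with hi | hi | hi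
    · rw [rightSize_node_of_le (by omega), hLv i h1 (by omega)]
    · rw [rightSize_node_of_eq hi, hR, show i = m by omega]
      omega
    · rw [rightSize_node_of_gt hi, hRv _ (by omega) (by omega)]
      congr 1
      omega

end BinTree

open Classical in
noncomputable def decSpan (n : ℕ) (rel : ℕ → ℕ → Prop) (b : ℕ) : ℕ :=
  Nat.findGreatest (fun k => rel (b + k) b) (n - b)

section DecSpan

variable {n : ℕ} {rel : ℕ → ℕ → Prop} {b k : ℕ}

theorem decSpan_le : decSpan n rel b ≤ n - b := by
  classical
  exact Nat.findGreatest_le _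

theorem le_decSpan (hk : k ≤ n - b) (h : rel (b + k) b) : k ≤ decSpan n rel b := by
  classical
  exact Nat.le_findGreatest hk h

theorem rel_add_decSpan (h : decSpan n rel b ≠ 0) : rel (b + decSpan n rel b) b := by
  classical
  exact Nat.findGreatest_of_ne_zero (P := fun k => rel (b + k) b) rfl h

end DecSpan

namespace IsIntervalPoset

variable {n : ℕ} {rel : ℕ → ℕ → Prop}

theorem rel_iff_le_add_decSpan (hP : IsIntervalPoset n rel) {a b : ℕ} (hba : b < a) :
    rel a b ↔ a ≤ b + decSpan n rel b := by
  obtain ⟨hbd, -, -, -, hdec⟩ := hP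
  constructor
  · intro h
    have := hbd a b h
    have hk : rel (b + (a - b)) b := by rwa [Nat.add_sub_cancel' hba.le]
    have := le_decSpan (n := n) (by omega) hk
    omega
  · intro h
    have hspec : rel (b + decSpan n rel b) b := rel_add_decSpan (by omega)
    rcases h.eq_or_lt with rfl | hlt
    · exact hspec
    · exact hdec b a _ hba hlt hspec

theorem isRightSizes_decSpan (hP : IsIntervalPoset n rel) :
    BinTree.IsRightSizes n (decSpan n rel) := by
  intro i h1 h2
  have : decSpan n rel i ≤ n - i := decSpan_le
  refine ⟨by omega, fun j hij hji => ?_⟩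
  rcases Nat.eq_zero_or_pos (decSpan n rel j) with h0 | hpos
  · omega
  · have hji' := (hP.rel_iff_le_add_decSpan hij).2 hji
    have hj := (hP.rel_iff_le_add_decSpan (a := j + decSpan n rel j) (by omega)).2 le_rfl
    exact (hP.rel_iff_le_add_decSpan (by omega)).1 (hP.2.2.1 _ _ _ hj hji')

theorem exists_decRel_iff (hP : IsIntervalPoset n rel) :
    ∃ T : BinTree, T.size = n ∧ ∀ a b, T.decRel a b ↔ b < a ∧ rel a b := by
  obtain ⟨T, hT, hTv⟩ := BinTree.exists_rightSize_eq hP.isRightSizes_decSpan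
  refine ⟨T, hT, fun a b => ?_⟩
  by_cases hb : 1 ≤ b ∧ b ≤ n
  · rw [BinTree.decRel_iff, hTv b hb.1 hb.2]
    exact and_congr_right fun hba => (hP.rel_iff_le_add_decSpan hba).symm
  · refine iff_of_false (fun h => hb ?_) (fun h => hb ?_)
    · have := BinTree.inSub_bounds h.2.2; omega
    · have := hP.1 a b h.2; omega

theorem dual (hP : IsIntervalPoset n rel) :
    IsIntervalPoset n (fun a b => rel (n + 1 - a) (n + 1 - b)) := by
  obtain ⟨hbd, hirr, htrans, hinc, hdec⟩ := hP
  refine ⟨fun a b h => ?_, fun a => hirr _, fun a b c => htrans _ _ _,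
    fun a b c hab hbc h => ?_, fun a b c hab hbc h => ?_⟩
  · have := hbd _ _ h; omega
  · have := hbd _ _ h
    exact hdec _ _ _ (by omega) (by omega) h
  · have := hbd _ _ h
    exact hinc _ _ _ (by omega) (by omega) h

theorem exists_incRel_iff (hP : IsIntervalPoset n rel) :
    ∃ T : BinTree, T.size = n ∧ ∀ a b, T.incRel a b ↔ a < b ∧ rel a b := by
  obtain ⟨T, hT, hTdec⟩ := hP.dual.exists_decRel_iff
  refine ⟨T.mirror, by rw [BinTree.size_mirror, hT], fun a b => ?_⟩
  rw [BinTree.incRel_iff_decRel_mirror, BinTree.mirror_mirror, BinTree.size_mirror, hT, hTdec]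
  by_cases hab : a ≤ n ∧ b ≤ n
  · rw [Nat.sub_sub_self (by omega), Nat.sub_sub_self (by omega)]
    exact and_congr_left fun _ => by omega
  · refine iff_of_false (fun h => hab ?_) (fun h => hab ?_)
    · have := hP.1 _ _ h.2; omega
    · have := hP.1 _ _ h.2; omega

end IsIntervalPoset

/-- A poset `P` on `{1,…,n}` is an interval-poset iff there exist binary trees
`T ≤ T'` of size `n` in the Tamari order such that the relations of `P` are exactly those of
the decreasing forest `dec(T)` together with those of the increasing forest `inc(T')`. -/
theorem isIntervalPoset_iff (n : ℕ) (rel : ℕ → ℕ → Prop) :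
    IsIntervalPoset n rel ↔
      ∃ T T' : BinTree, T.size = n ∧ T'.size = n ∧ TamariLE T T' ∧
        ∀ a b, rel a b ↔ IPrel T T' a b := by
  constructor
  · intro hP
    obtain ⟨T, hT, hdec⟩ := hP.exists_decRel_iff
    obtain ⟨T', hT', hinc⟩ := hP.exists_incRel_iff
    refine ⟨T, T', hT, hT', tamariLE_of_forall_decRel_not_incRel (hT.trans hT'.symm)
      fun a b hd hi => hP.2.1 a (hP.2.2.1 a b a ((hdec a b).1 hd).2 ((hinc b a).1 hi).2),
      fun a b => ?_⟩
    rw [IPrel, hdec, hinc]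
    constructor
    · intro h
      rcases lt_trichotomy a b with hab | rfl | hab
      · exact .inr ⟨hab, h⟩
      · exact absurd h (hP.2.1 a)
      · exact .inl ⟨hab, h⟩
    · rintro (⟨-, h⟩ | ⟨-, h⟩) <;> exact h
  · rintro ⟨T, T', hT, hT', h, hrel⟩
    obtain rfl : rel = IPrel T T' := funext₂ fun a b => propext (hrel a b)
    exact isIntervalPoset_IPrel hT hT' h
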